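/- Let σ > 0, μ₁, μ₂ ∈ ℝ and α > 1. Then the Rényi divergence of order α between the one-dimensional Gaussian measures N(μ₁, σ²) and N(μ₂, σ²) equals α(μ₁ − μ₂)²/(2σ²). In particular, a real-valued Gaussian mechanism with noise scale σ and sensitivity 1 satisfies (α, α/(2σ²))-RDP for every α > 1. -/

import Mathlib

open MeasureTheory ProbabilityTheory Real

/-- Rényi divergence of order `α` between measures `P` and `Q`:
`D_α(P‖Q) = (α−1)⁻¹ · log ∫ (dP/dQ)^α dQ`. -/
noncomputable def renyiDiv {X : Type*} [MeasurableSpace X] (α : ℝ) (P Q : Measure X) : ℝ :=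
  (α - 1)⁻¹ * Real.log (∫ x, ((P.rnDeriv Q x).toReal) ^ α ∂Q)

/-! Completing the square in the exponent, `q (p/q)^α` for Gaussian densities `p, q` of means
`μ₁, μ₂` and equal variance `v` is `exp (α (α - 1) (μ₁ - μ₂)² / (2v))` times the Gaussian density of
mean `μ₂ + α (μ₁ - μ₂)` and variance `v`. Integrating against `N(μ₂, v)` leaves only that constant,
whose logarithm divided by `α - 1` is the divergence. -/

namespace ProbabilityTheory

open scoped NNReal

variable {μ₁ μ₂ : ℝ} {v : ℝ≥0}

lemma gaussianPDFReal_mul_div_rpow (hv : v ≠ 0) (α x : ℝ) :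
    gaussianPDFReal μ₂ v x * (gaussianPDFReal μ₁ v x / gaussianPDFReal μ₂ v x) ^ α
      = exp (α * (α - 1) * (μ₁ - μ₂) ^ 2 / (2 * v)) *
          gaussianPDFReal (μ₂ + α * (μ₁ - μ₂)) v x := by
  have hv' : (v : ℝ) ≠ 0 := NNReal.coe_ne_zero.mpr hv
  have hc : 0 < (√(2 * π * v))⁻¹ := by positivity
  simp only [gaussianPDFReal]
  rw [mul_div_mul_left _ _ hc.ne', ← exp_sub, ← exp_mul, mul_assoc, ← exp_add, mul_left_comm,
    ← exp_add]
  congr 2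
  field_simp
  ring

lemma toReal_rnDeriv_gaussianReal_ae (hv : v ≠ 0) :
    ∀ᵐ x, ((gaussianReal μ₁ v).rnDeriv (gaussianReal μ₂ v) x).toReal
      = gaussianPDFReal μ₁ v x / gaussianPDFReal μ₂ v x := by
  have h := Measure.rnDeriv_withDensity_right (gaussianReal μ₁ v) volume
    (measurable_gaussianPDF μ₂ v).aemeasurable
    (ae_of_all _ fun x => (gaussianPDF_pos _ hv x).ne') (ae_of_all _ fun _ => gaussianPDF_ne_top)
  rw [← gaussianReal_of_var_ne_zero _ hv] at h
  filter_upwards [h, rnDeriv_gaussianReal μ₁ v] with x hx hx₁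
  rw [hx, hx₁, ENNReal.toReal_mul, ENNReal.toReal_inv, toReal_gaussianPDF, toReal_gaussianPDF,
    inv_mul_eq_div]

lemma integral_rpow_rnDeriv_gaussianReal (hv : v ≠ 0) (α : ℝ) :
    ∫ x, ((gaussianReal μ₁ v).rnDeriv (gaussianReal μ₂ v) x).toReal ^ α ∂gaussianReal μ₂ v
      = exp (α * (α - 1) * (μ₁ - μ₂) ^ 2 / (2 * v)) := by
  rw [integral_gaussianReal_eq_integral_smul hv]
  calc ∫ x, gaussianPDFReal μ₂ v x •
          ((gaussianReal μ₁ v).rnDeriv (gaussianReal μ₂ v) x).toReal ^ α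
      _ = ∫ x, exp (α * (α - 1) * (μ₁ - μ₂) ^ 2 / (2 * v)) *
            gaussianPDFReal (μ₂ + α * (μ₁ - μ₂)) v x := by
        refine integral_congr_ae ?_
        filter_upwards [toReal_rnDeriv_gaussianReal_ae hv] with x hx
        rw [hx, smul_eq_mul, gaussianPDFReal_mul_div_rpow hv]
      _ = exp (α * (α - 1) * (μ₁ - μ₂) ^ 2 / (2 * v)) := by
        rw [integral_const_mul, integral_gaussianPDFReal_eq_one _ hv, mul_one]

lemma renyiDiv_gaussianReal_of_var_ne_zero (hv : v ≠ 0) {α : ℝ} (hα : α ≠ 1) :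
    renyiDiv α (gaussianReal μ₁ v) (gaussianReal μ₂ v) = α * (μ₁ - μ₂) ^ 2 / (2 * v) := by
  have hα' : α - 1 ≠ 0 := sub_ne_zero.mpr hα
  rw [renyiDiv, integral_rpow_rnDeriv_gaussianReal hv, log_exp]
  field_simp

end ProbabilityTheory

/-- The Rényi divergence of order `α > 1` between `N(μ₁,σ²)` and `N(μ₂,σ²)` equals
`α (μ₁ − μ₂)² / (2σ²)`; in particular a Gaussian mechanism with sensitivity 1 and noise scale
`σ` satisfies `(α, α/(2σ²))`-RDP. -/
theorem renyiDiv_gaussianReal (σ μ₁ μ₂ : ℝ) (hσ : 0 < σ) (α : ℝ) (hα : 1 < α) :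
    renyiDiv α (gaussianReal μ₁ ⟨σ ^ 2, sq_nonneg σ⟩) (gaussianReal μ₂ ⟨σ ^ 2, sq_nonneg σ⟩)
      = α * (μ₁ - μ₂) ^ 2 / (2 * σ ^ 2) := by
  have hv : (⟨σ ^ 2, sq_nonneg σ⟩ : NNReal) ≠ 0 :=
    fun h => pow_ne_zero 2 hσ.ne' (congrArg Subtype.val h)
  exact renyiDiv_gaussianReal_of_var_ne_zero hv hα.ne'
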